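/- Let a < b be reals, let p, q be exponents with 1 ≤ p < q < ∞, let c ≥ 0, ν ≥ 0, and let μ ∈ L^{qp/(q−p)}([a,b]) be nonnegative. Let F(t,u,v) be measurable in t and satisfy, for every ρ > 0, |F(t,u₁,v₁) − F(t,u₂,v₂)| ≤ c |u₁ − u₂| + (μ(t) + ν ρ^{(q−p)/p}) |v₁ − v₂| whenever |v₁|, |v₂| ≤ ρ (all u₁, u₂ ∈ ℝ). Then for every ρ > 0, all x₁, x₂ ∈ L^p([a,b]) and all y₁, y₂ ∈ L^q([a,b]) with ‖y₁‖_{L^q} ≤ ρ and ‖y₂‖_{L^q} ≤ ρ, the functions t ↦ F(t, x_i(t), y_i(t)) differ by an L^p function and ‖F(·, x₁, y₁) − F(·, x₂, y₂)‖_{L^p} ≤ c ‖x₁ − x₂‖_{L^p} + (‖μ‖_{L^{qp/(q−p)}} + ν ρ^{(q−p)/p}) ‖y₁ − y₂‖_{L^q}. -/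

import Mathlib

/-!
Split `F(x₁,y₁) - F(x₂,y₂)` as `(F(x₁,y₁) - F(x₂,y₁)) + (F(x₂,y₁) - F(x₂,y₂))`; the first part is
pointwise at most `c |x₁ - x₂|`. For the second, the pointwise Lipschitz constant at `t` is
`μ t + ν w(t)^α` with `w = max(|y₁|, |y₂|)`, and Hölder (`1/p = 1/r + 1/q`, `r α = q`) turns it into
`‖μ‖_r + ν ‖w‖_q^α`. Since `‖w‖_q` may exceed `ρ`, subdivide the segment from `y₂` to `y₁` into `n`
pieces: by convexity every subdivision point has `L^q` norm `≤ ρ`, so consecutive points give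
`‖w_k‖_q ≤ ρ + ‖y₁ - y₂‖_q / n`; summing the `n` increments and letting `n → ∞` yields `ν ρ^α`.
-/

open MeasureTheory ENNReal Filter Topology

def LipschitzOnBalls (g : ℝ → ℝ) (L : ℝ → ℝ) : Prop :=
  ∀ s, 0 < s → ∀ v₁ v₂, |v₁| ≤ s → |v₂| ≤ s → |g v₁ - g v₂| ≤ L s * |v₁ - v₂|

theorem LipschitzOnBalls.abs_sub_le {g L : ℝ → ℝ} (hg : LipschitzOnBalls g L) (v₁ v₂ : ℝ) :
    |g v₁ - g v₂| ≤ L (max |v₁| |v₂|) * |v₁ - v₂| := by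
  rcases (le_max_of_le_left (abs_nonneg v₁) : 0 ≤ max |v₁| |v₂|).lt_or_eq with hs | hs
  · exact hg _ hs v₁ v₂ (le_max_left _ _) (le_max_right _ _)
  · have h₁ : v₁ = 0 := abs_nonpos_iff.mp (hs ▸ le_max_left _ _)
    have h₂ : v₂ = 0 := abs_nonpos_iff.mp (hs ▸ le_max_right _ _)
    simp [h₁, h₂]

variable {X : Type*} [MeasurableSpace X] {m : Measure X}

theorem aestronglyMeasurable_superposition {F : X → ℝ → ℝ → ℝ}
    (hF_meas : ∀ u v, Measurable fun t => F t u v)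
    (hF_cont : ∀ t, Continuous fun uv : ℝ × ℝ => F t uv.1 uv.2)
    {x y : X → ℝ} (hx : AEMeasurable x m) (hy : AEMeasurable y m) :
    AEStronglyMeasurable (fun t => F t (x t) (y t)) m :=
  ((measurable_uncurry_of_continuous_of_measurable hF_cont fun uv => hF_meas uv.1 uv.2)
    |>.comp_aemeasurable ((hx.prodMk hy).prodMk aemeasurable_id)).aestronglyMeasurable

theorem eLpNorm_sub_smul_add_smul_le {E : Type*} [NormedAddCommGroup E] [NormedSpace ℝ E]
    {q : ℝ≥0∞} (hq : 1 ≤ q) {f g : X → E} (hf : AEStronglyMeasurable f m)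
    (hg : AEStronglyMeasurable g m) {ρ : ℝ≥0∞} (hfρ : eLpNorm f q m ≤ ρ) (hgρ : eLpNorm g q m ≤ ρ)
    {θ : ℝ} (hθ₀ : 0 ≤ θ) (hθ₁ : θ ≤ 1) :
    eLpNorm ((1 - θ) • f + θ • g) q m ≤ ρ :=
  calc eLpNorm ((1 - θ) • f + θ • g) q m
      ≤ ‖1 - θ‖ₑ * eLpNorm f q m + ‖θ‖ₑ * eLpNorm g q m := by
        rw [← eLpNorm_const_smul, ← eLpNorm_const_smul]
        exact eLpNorm_add_le (hf.const_smul _) (hg.const_smul _) hq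
    _ ≤ ENNReal.ofReal (1 - θ) * ρ + ENNReal.ofReal θ * ρ := by
        rw [Real.enorm_eq_ofReal (sub_nonneg.mpr hθ₁), Real.enorm_eq_ofReal hθ₀]
        gcongr
    _ = ρ := by
        rw [← add_mul, ← ENNReal.ofReal_add (sub_nonneg.mpr hθ₁) hθ₀, sub_add_cancel,
          ENNReal.ofReal_one, one_mul]

theorem eLpNorm_sub_le_of_lipschitzOnBalls {p q r : ℝ≥0∞} [HolderTriple r q p] (hr : 1 ≤ r)
    {α ν : ℝ} (hα : 0 < α) (hν : 0 ≤ ν) (hrq : r * ENNReal.ofReal α = q)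
    {G : X → ℝ → ℝ} {μ : X → ℝ} (hG : ∀ t, LipschitzOnBalls (G t) fun s => μ t + ν * s ^ α)
    (hμ : AEStronglyMeasurable μ m) {u v : X → ℝ} (hu : AEMeasurable u m)
    (hv : AEMeasurable v m) :
    eLpNorm (fun t => G t (u t) - G t (v t)) p m ≤
      (eLpNorm μ r m + ENNReal.ofReal ν * eLpNorm (fun t => max |u t| |v t|) q m ^ α) *
        eLpNorm (fun t => u t - v t) q m := by
  set w : X → ℝ := fun t => max |u t| |v t|
  have hw : AEMeasurable w m := hu.abs.max hv.abs
  have hw_norm : ∀ t, ‖w t‖ = w t := fun t => Real.norm_of_nonneg (le_max_of_le_left (abs_nonneg _))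
  have hwα : eLpNorm (fun t => w t ^ α) r m = eLpNorm w q m ^ α := by
    rw [← hrq, ← eLpNorm_norm_rpow w hα]
    simp_rw [hw_norm]
  have hweight : eLpNorm (μ + ν • fun t => w t ^ α) r m ≤
      eLpNorm μ r m + ENNReal.ofReal ν * eLpNorm w q m ^ α := by
    refine (eLpNorm_add_le hμ ((hw.pow_const α).aestronglyMeasurable.const_smul ν) hr).trans ?_
    rw [eLpNorm_const_smul, Real.enorm_eq_ofReal hν, hwα]
  calc eLpNorm (fun t => G t (u t) - G t (v t)) p m
      ≤ eLpNorm ((μ + ν • fun t => w t ^ α) • fun t => |u t - v t|) p m := by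
        refine eLpNorm_mono_real fun t => ?_
        simpa [Real.norm_eq_abs, w] using (hG t).abs_sub_le (u t) (v t)
    _ ≤ eLpNorm (μ + ν • fun t => w t ^ α) r m * eLpNorm (fun t => |u t - v t|) q m :=
        eLpNorm_smul_le_mul_eLpNorm (hu.sub hv).abs.aestronglyMeasurable
          (hμ.add ((hw.pow_const α).aestronglyMeasurable.const_smul ν))
    _ ≤ _ := by
        simp_rw [← Real.norm_eq_abs, eLpNorm_norm]
        gcongr

theorem eLpNorm_max_abs_le {q : ℝ≥0∞} (hq : 1 ≤ q) {f g : X → ℝ} (hf : AEStronglyMeasurable f m)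
    (hg : AEStronglyMeasurable g m) :
    eLpNorm (fun t => max |f t| |g t|) q m ≤
      eLpNorm f q m + eLpNorm (fun t => g t - f t) q m :=
  calc eLpNorm (fun t => max |f t| |g t|) q m
      ≤ eLpNorm ((fun t => ‖f t‖) + fun t => ‖g t - f t‖) q m := by
        refine eLpNorm_mono_real fun t => ?_
        rw [Real.norm_of_nonneg (le_max_of_le_left (abs_nonneg _))]
        simp only [Pi.add_apply, Real.norm_eq_abs]
        refine max_le (le_add_of_nonneg_right (abs_nonneg _)) ?_
        simpa using abs_add_le (f t) (g t - f t)
    _ ≤ _ := by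
        refine (eLpNorm_add_le hf.norm (hg.sub hf).norm hq).trans_eq ?_
        rw [eLpNorm_norm, eLpNorm_norm (g - f)]
        rfl

theorem eLpNorm_sub_le_of_lipschitzOnBalls_of_subdivision {p q r : ℝ≥0∞} [HolderTriple r q p]
    (hp : 1 ≤ p) (hq : 1 ≤ q) (hr : 1 ≤ r) {α ν : ℝ} (hα : 0 < α) (hν : 0 ≤ ν)
    (hrq : r * ENNReal.ofReal α = q) {G : X → ℝ → ℝ} {μ : X → ℝ}
    (hG : ∀ t, LipschitzOnBalls (G t) fun s => μ t + ν * s ^ α)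
    (hGm : ∀ z, AEMeasurable z m → AEStronglyMeasurable (fun t => G t (z t)) m)
    (hμ : AEStronglyMeasurable μ m) {y₁ y₂ : X → ℝ} (hy₁ : AEMeasurable y₁ m)
    (hy₂ : AEMeasurable y₂ m) {ρ : ℝ≥0∞} (hy₁ρ : eLpNorm y₁ q m ≤ ρ) (hy₂ρ : eLpNorm y₂ q m ≤ ρ)
    {n : ℕ} (hn : n ≠ 0) :
    eLpNorm (fun t => G t (y₁ t) - G t (y₂ t)) p m ≤
      (eLpNorm μ r m + ENNReal.ofReal ν *
          (ρ + (n : ℝ≥0∞)⁻¹ * eLpNorm (fun t => y₁ t - y₂ t) q m) ^ α) *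
        eLpNorm (fun t => y₁ t - y₂ t) q m := by
  set D := eLpNorm (fun t => y₁ t - y₂ t) q m
  set K := eLpNorm μ r m + ENNReal.ofReal ν * (ρ + (n : ℝ≥0∞)⁻¹ * D) ^ α with hK
  set z : ℕ → X → ℝ := fun k => (1 - (k / n : ℝ)) • y₂ + (k / n : ℝ) • y₁
  have hz_meas : ∀ k, AEMeasurable (z k) m := fun k =>
    (hy₂.const_smul _).add (hy₁.const_smul _)
  have hz_step : ∀ k t, z (k + 1) t - z k t = (n : ℝ)⁻¹ * (y₁ t - y₂ t) := by
    intro k t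
    simp only [z, Pi.add_apply, Pi.smul_apply, smul_eq_mul]
    push_cast
    field_simp
    ring
  have hz_norm : ∀ k ≤ n, eLpNorm (z k) q m ≤ ρ := fun k hk =>
    eLpNorm_sub_smul_add_smul_le hq hy₂.aestronglyMeasurable hy₁.aestronglyMeasurable hy₂ρ hy₁ρ
      (by positivity) (div_le_one_of_le₀ (by exact_mod_cast hk) (Nat.cast_nonneg n))
  have hstep_norm : ∀ k, eLpNorm (fun t => z (k + 1) t - z k t) q m = (n : ℝ≥0∞)⁻¹ * D := by
    intro k
    simp_rw [hz_step]
    rw [show (fun t => (n : ℝ)⁻¹ * (y₁ t - y₂ t)) = (n : ℝ)⁻¹ • fun t => y₁ t - y₂ t from rfl,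
      eLpNorm_const_smul, enorm_inv (by exact_mod_cast hn), Real.enorm_natCast]
  have hsegment : ∀ k < n,
      eLpNorm (fun t => G t (z (k + 1) t) - G t (z k t)) p m ≤ K * ((n : ℝ≥0∞)⁻¹ * D) := by
    intro k hk
    refine (eLpNorm_sub_le_of_lipschitzOnBalls hr hα hν hrq hG hμ (hz_meas _) (hz_meas k)).trans ?_
    rw [hstep_norm, hK]
    gcongr (eLpNorm μ r m + ENNReal.ofReal ν * ?_ ^ α) * _
    calc eLpNorm (fun t => max |z (k + 1) t| |z k t|) q m
        = eLpNorm (fun t => max |z k t| |z (k + 1) t|) q m := by simp_rw [max_comm]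
      _ ≤ eLpNorm (z k) q m + eLpNorm (fun t => z (k + 1) t - z k t) q m :=
        eLpNorm_max_abs_le hq (hz_meas k).aestronglyMeasurable (hz_meas _).aestronglyMeasurable
      _ ≤ ρ + (n : ℝ≥0∞)⁻¹ * D := by rw [hstep_norm]; gcongr; exact hz_norm k hk.le
  have htelescope : (fun t => G t (y₁ t) - G t (y₂ t)) =
      ∑ k ∈ Finset.range n, fun t => G t (z (k + 1) t) - G t (z k t) := by
    funext t
    rw [Finset.sum_apply, Finset.sum_range_sub (fun k => G t (z k t))]
    simp [z, hn]
  calc eLpNorm (fun t => G t (y₁ t) - G t (y₂ t)) p m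
      ≤ ∑ k ∈ Finset.range n, eLpNorm (fun t => G t (z (k + 1) t) - G t (z k t)) p m := by
        rw [htelescope]
        exact eLpNorm_sum_le (fun k _ => (hGm _ (hz_meas _)).sub (hGm _ (hz_meas k))) hp
    _ ≤ ∑ _k ∈ Finset.range n, K * ((n : ℝ≥0∞)⁻¹ * D) :=
        Finset.sum_le_sum fun k hk => hsegment k (Finset.mem_range.mp hk)
    _ = K * D := by
        rw [Finset.sum_const, Finset.card_range, nsmul_eq_mul, mul_left_comm,
          ← mul_assoc (n : ℝ≥0∞), ENNReal.mul_inv_cancel (by exact_mod_cast hn) (natCast_ne_top n),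
          one_mul]

theorem eLpNorm_sub_le_of_lipschitzOnBalls_of_eLpNorm_le {p q r : ℝ≥0∞} [HolderTriple r q p]
    (hp : 1 ≤ p) (hq : 1 ≤ q) (hr : 1 ≤ r) {α ν : ℝ} (hα : 0 < α) (hν : 0 ≤ ν)
    (hrq : r * ENNReal.ofReal α = q) {G : X → ℝ → ℝ} {μ : X → ℝ}
    (hG : ∀ t, LipschitzOnBalls (G t) fun s => μ t + ν * s ^ α)
    (hGm : ∀ z, AEMeasurable z m → AEStronglyMeasurable (fun t => G t (z t)) m)
    (hμ : AEStronglyMeasurable μ m) {y₁ y₂ : X → ℝ} (hy₁ : MemLp y₁ q m) (hy₂ : MemLp y₂ q m)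
    {ρ : ℝ≥0∞} (hy₁ρ : eLpNorm y₁ q m ≤ ρ) (hy₂ρ : eLpNorm y₂ q m ≤ ρ) :
    eLpNorm (fun t => G t (y₁ t) - G t (y₂ t)) p m ≤
      (eLpNorm μ r m + ENNReal.ofReal ν * ρ ^ α) * eLpNorm (fun t => y₁ t - y₂ t) q m := by
  have hD : eLpNorm (fun t => y₁ t - y₂ t) q m ≠ ∞ := (hy₁.sub hy₂).eLpNorm_ne_top
  have hρ_n : Tendsto (fun n : ℕ => ρ + (n : ℝ≥0∞)⁻¹ * eLpNorm (fun t => y₁ t - y₂ t) q m)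
      atTop (𝓝 ρ) := by
    simpa using tendsto_const_nhds.add
      (ENNReal.Tendsto.mul_const ENNReal.tendsto_inv_nat_nhds_zero (Or.inr hD))
  refine ge_of_tendsto (ENNReal.Tendsto.mul_const (tendsto_const_nhds.add
    (ENNReal.Tendsto.const_mul ((ENNReal.continuous_rpow_const.tendsto ρ).comp hρ_n)
      (Or.inr ofReal_ne_top))) (Or.inr hD)) ?_
  filter_upwards [eventually_ne_atTop 0] with n hn
  exact eLpNorm_sub_le_of_lipschitzOnBalls_of_subdivision hp hq hr hα hν hrq hG hGm hμ
    hy₁.aemeasurable hy₂.aemeasurable hy₁ρ hy₂ρ hn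

theorem eLpNorm_superposition_sub_le {p q r : ℝ≥0∞} [HolderTriple r q p]
    (hp : 1 ≤ p) (hq : 1 ≤ q) (hr : 1 ≤ r) {α ν c : ℝ} (hα : 0 < α) (hν : 0 ≤ ν)
    (hrq : r * ENNReal.ofReal α = q) {F : X → ℝ → ℝ → ℝ} {μ : X → ℝ}
    (hF_meas : ∀ u v, Measurable fun t => F t u v)
    (hF_cont : ∀ t, Continuous fun uv : ℝ × ℝ => F t uv.1 uv.2)
    (hF_fst : ∀ t u₁ u₂ v, |F t u₁ v - F t u₂ v| ≤ c * |u₁ - u₂|)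
    (hF_snd : ∀ t u, LipschitzOnBalls (F t u) fun s => μ t + ν * s ^ α)
    (hμ : AEStronglyMeasurable μ m) {x₁ x₂ y₁ y₂ : X → ℝ} (hx₁ : AEMeasurable x₁ m)
    (hx₂ : AEMeasurable x₂ m) (hy₁ : MemLp y₁ q m) (hy₂ : MemLp y₂ q m) {ρ : ℝ≥0∞}
    (hy₁ρ : eLpNorm y₁ q m ≤ ρ) (hy₂ρ : eLpNorm y₂ q m ≤ ρ) :
    eLpNorm (fun t => F t (x₁ t) (y₁ t) - F t (x₂ t) (y₂ t)) p m ≤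
      ENNReal.ofReal c * eLpNorm (fun t => x₁ t - x₂ t) p m +
        (eLpNorm μ r m + ENNReal.ofReal ν * ρ ^ α) * eLpNorm (fun t => y₁ t - y₂ t) q m := by
  have hF {x y : X → ℝ} (hx : AEMeasurable x m) (hy : AEMeasurable y m) :=
    aestronglyMeasurable_superposition hF_meas hF_cont hx hy
  have hfst : eLpNorm (fun t => F t (x₁ t) (y₁ t) - F t (x₂ t) (y₁ t)) p m ≤
      ENNReal.ofReal c * eLpNorm (fun t => x₁ t - x₂ t) p m :=
    eLpNorm_le_mul_eLpNorm_of_ae_le_mul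
      (ae_of_all _ fun t => by simpa only [Real.norm_eq_abs] using hF_fst t _ _ _) p
  have hsnd := eLpNorm_sub_le_of_lipschitzOnBalls_of_eLpNorm_le hp hq hr hα hν hrq (hF_snd · (x₂ _))
    (fun _ hz => hF hx₂ hz) hμ hy₁ hy₂ hy₁ρ hy₂ρ
  calc eLpNorm (fun t => F t (x₁ t) (y₁ t) - F t (x₂ t) (y₂ t)) p m
      = eLpNorm ((fun t => F t (x₁ t) (y₁ t) - F t (x₂ t) (y₁ t)) +
          fun t => F t (x₂ t) (y₁ t) - F t (x₂ t) (y₂ t)) p m := by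
        simp only [Pi.add_def, sub_add_sub_cancel]
    _ ≤ _ := (eLpNorm_add_le ((hF hx₁ hy₁.aemeasurable).sub (hF hx₂ hy₁.aemeasurable))
          ((hF hx₂ hy₁.aemeasurable).sub (hF hx₂ hy₂.aemeasurable)) hp).trans
        (add_le_add hfst hsnd)

theorem holderTriple_ofReal_mul_div_sub {p q : ℝ} (hp : 0 < p) (hpq : p < q) :
    HolderTriple (ENNReal.ofReal (q * p / (q - p))) (ENNReal.ofReal q) (ENNReal.ofReal p) := by
  have hq : 0 < q := hp.trans hpq
  have hr : 0 < q * p / (q - p) := div_pos (mul_pos hq hp) (sub_pos.mpr hpq)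
  refine ⟨?_⟩
  rw [← ofReal_inv_of_pos hr, ← ofReal_inv_of_pos hq, ← ofReal_inv_of_pos hp,
    ← ofReal_add (inv_nonneg.mpr hr.le) (inv_nonneg.mpr hq.le)]
  congr 1
  field_simp
  ring

theorem ofReal_mul_div_sub_mul_ofReal_sub_div {p q : ℝ} (hp : 0 < p) (hpq : p < q) :
    ENNReal.ofReal (q * p / (q - p)) * ENNReal.ofReal ((q - p) / p) = ENNReal.ofReal q := by
  rw [← ofReal_mul (div_pos (mul_pos (hp.trans hpq) hp) (sub_pos.mpr hpq)).le]
  congr 1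
  field_simp [(sub_pos.mpr hpq).ne']

theorem two_argument_superposition_variable_lipschitz_general
    (a b : ℝ) (p q : ℝ) (hp : 1 ≤ p) (hpq : p < q)
    (c ν : ℝ) (hν : 0 ≤ ν) (μ : ℝ → ℝ)
    (hμ_mem : MemLp μ (ENNReal.ofReal (q * p / (q - p)))
      (volume.restrict (Set.Icc a b)))
    (F : ℝ → ℝ → ℝ → ℝ)
    (hF_meas : ∀ u v : ℝ, Measurable (fun t => F t u v))
    (hF_cont : ∀ t : ℝ, Continuous (fun uv : ℝ × ℝ => F t uv.1 uv.2))
    (hF_lip : ∀ ρ : ℝ, 0 < ρ → ∀ t u₁ u₂ v₁ v₂ : ℝ, |v₁| ≤ ρ → |v₂| ≤ ρ →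
      |F t u₁ v₁ - F t u₂ v₂| ≤
        c * |u₁ - u₂| + (μ t + ν * ρ ^ ((q - p) / p)) * |v₁ - v₂|) :
    ∀ ρ : ℝ, 0 < ρ → ∀ x₁ x₂ y₁ y₂ : ℝ → ℝ,
      MemLp x₁ (ENNReal.ofReal p) (volume.restrict (Set.Icc a b)) →
      MemLp x₂ (ENNReal.ofReal p) (volume.restrict (Set.Icc a b)) →
      MemLp y₁ (ENNReal.ofReal q) (volume.restrict (Set.Icc a b)) →
      MemLp y₂ (ENNReal.ofReal q) (volume.restrict (Set.Icc a b)) →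
      eLpNorm y₁ (ENNReal.ofReal q) (volume.restrict (Set.Icc a b)) ≤ ENNReal.ofReal ρ →
      eLpNorm y₂ (ENNReal.ofReal q) (volume.restrict (Set.Icc a b)) ≤ ENNReal.ofReal ρ →
      MemLp (fun t => F t (x₁ t) (y₁ t) - F t (x₂ t) (y₂ t)) (ENNReal.ofReal p)
          (volume.restrict (Set.Icc a b)) ∧
        eLpNorm (fun t => F t (x₁ t) (y₁ t) - F t (x₂ t) (y₂ t)) (ENNReal.ofReal p)
            (volume.restrict (Set.Icc a b)) ≤
          ENNReal.ofReal c *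
              eLpNorm (fun t => x₁ t - x₂ t) (ENNReal.ofReal p)
                (volume.restrict (Set.Icc a b)) +
            ENNReal.ofReal
                ((eLpNorm μ (ENNReal.ofReal (q * p / (q - p)))
                    (volume.restrict (Set.Icc a b))).toReal +
                  ν * ρ ^ ((q - p) / p)) *
              eLpNorm (fun t => y₁ t - y₂ t) (ENNReal.ofReal q)
                (volume.restrict (Set.Icc a b)) := by
  intro ρ hρ x₁ x₂ y₁ y₂ hx₁ hx₂ hy₁ hy₂ hy₁ρ hy₂ρ
  have hp₀ : 0 < p := one_pos.trans_le hp
  have hqp : 0 < q - p := sub_pos.mpr hpq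
  have hα : 0 < (q - p) / p := div_pos hqp hp₀
  have := holderTriple_ofReal_mul_div_sub hp₀ hpq
  have hF_fst (t u₁ u₂ v : ℝ) : |F t u₁ v - F t u₂ v| ≤ c * |u₁ - u₂| := by
    simpa using hF_lip (|v| + 1) (by positivity) t u₁ u₂ v v (by linarith) (by linarith)
  have hF_snd (t u : ℝ) : LipschitzOnBalls (F t u) fun s => μ t + ν * s ^ ((q - p) / p) :=
    fun s hs v₁ v₂ h₁ h₂ => by simpa using hF_lip s hs t u u v₁ v₂ h₁ h₂
  have hbound := eLpNorm_superposition_sub_le (one_le_ofReal.mpr hp)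
    (one_le_ofReal.mpr (hp.trans hpq.le))
    (one_le_ofReal.mpr (by rw [le_div_iff₀ hqp]; nlinarith)) hα hν
    (ofReal_mul_div_sub_mul_ofReal_sub_div hp₀ hpq) hF_meas hF_cont hF_fst hF_snd
    hμ_mem.1 hx₁.aemeasurable hx₂.aemeasurable hy₁ hy₂ hy₁ρ hy₂ρ
  rw [ofReal_add toReal_nonneg (by positivity), ofReal_toReal hμ_mem.eLpNorm_ne_top,
    ofReal_mul hν, ← ofReal_rpow_of_nonneg hρ.le hα.le]
  refine ⟨⟨?_, hbound.trans_lt ?_⟩, hbound⟩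
  · exact (aestronglyMeasurable_superposition hF_meas hF_cont hx₁.aemeasurable
      hy₁.aemeasurable).sub
      (aestronglyMeasurable_superposition hF_meas hF_cont hx₂.aemeasurable hy₂.aemeasurable)
  · have := (hx₁.sub hx₂).eLpNorm_ne_top
    have := (hy₁.sub hy₂).eLpNorm_ne_top
    have := hμ_mem.eLpNorm_ne_top
    finiteness

/-- Variable Lipschitz estimate for the two-argument superposition operator
`F(x,y)(t) = F(t,x(t),y(t))` from `L^p × L^q` to `L^p`:
`‖F(x₁,y₁) - F(x₂,y₂)‖_{L^p} ≤ c ‖x₁ - x₂‖_{L^p} + (‖μ‖_{L^{qp/(q-p)}} + ν ρ^{(q-p)/p}) ‖y₁ - y₂‖_{L^q}`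
whenever `‖y₁‖_{L^q}, ‖y₂‖_{L^q} ≤ ρ`. -/
theorem two_argument_superposition_variable_lipschitz
    (a b : ℝ) (hab : a < b) (p q : ℝ) (hp : 1 ≤ p) (hpq : p < q)
    (c ν : ℝ) (hc : 0 ≤ c) (hν : 0 ≤ ν) (μ : ℝ → ℝ)
    (hμ_nonneg : ∀ t : ℝ, 0 ≤ μ t)
    (hμ_mem : MemLp μ (ENNReal.ofReal (q * p / (q - p)))
      (volume.restrict (Set.Icc a b)))
    (F : ℝ → ℝ → ℝ → ℝ)
    (hF_meas : ∀ u v : ℝ, Measurable (fun t => F t u v))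
    (hF_cont : ∀ t : ℝ, Continuous (fun uv : ℝ × ℝ => F t uv.1 uv.2))
    (hF_lip : ∀ ρ : ℝ, 0 < ρ → ∀ t u₁ u₂ v₁ v₂ : ℝ, |v₁| ≤ ρ → |v₂| ≤ ρ →
      |F t u₁ v₁ - F t u₂ v₂| ≤
        c * |u₁ - u₂| + (μ t + ν * ρ ^ ((q - p) / p)) * |v₁ - v₂|) :
    ∀ ρ : ℝ, 0 < ρ → ∀ x₁ x₂ y₁ y₂ : ℝ → ℝ,
      MemLp x₁ (ENNReal.ofReal p) (volume.restrict (Set.Icc a b)) →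
      MemLp x₂ (ENNReal.ofReal p) (volume.restrict (Set.Icc a b)) →
      MemLp y₁ (ENNReal.ofReal q) (volume.restrict (Set.Icc a b)) →
      MemLp y₂ (ENNReal.ofReal q) (volume.restrict (Set.Icc a b)) →
      eLpNorm y₁ (ENNReal.ofReal q) (volume.restrict (Set.Icc a b)) ≤ ENNReal.ofReal ρ →
      eLpNorm y₂ (ENNReal.ofReal q) (volume.restrict (Set.Icc a b)) ≤ ENNReal.ofReal ρ →
      MemLp (fun t => F t (x₁ t) (y₁ t) - F t (x₂ t) (y₂ t)) (ENNReal.ofReal p)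
          (volume.restrict (Set.Icc a b)) ∧
        eLpNorm (fun t => F t (x₁ t) (y₁ t) - F t (x₂ t) (y₂ t)) (ENNReal.ofReal p)
            (volume.restrict (Set.Icc a b)) ≤
          ENNReal.ofReal c *
              eLpNorm (fun t => x₁ t - x₂ t) (ENNReal.ofReal p)
                (volume.restrict (Set.Icc a b)) +
            ENNReal.ofReal
                ((eLpNorm μ (ENNReal.ofReal (q * p / (q - p)))
                    (volume.restrict (Set.Icc a b))).toReal +
                  ν * ρ ^ ((q - p) / p)) *
              eLpNorm (fun t => y₁ t - y₂ t) (ENNReal.ofReal q)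
                (volume.restrict (Set.Icc a b)) :=
  two_argument_superposition_variable_lipschitz_general a b p q hp hpq c ν hν μ hμ_mem F hF_meas
    hF_cont hF_lip
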